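/- arXiv:2507.02916 — 3 statements merged into one kernel-verified Lean document; each statement's English description precedes it below -/
import Mathlib

section
/- Operand-inferring soundness (positive case): Given a conditional cardinality constraint l_y ↔ (Σᵢ₌₁ⁿ lᵢ ≥ k) and a partial assignment under which l_y is true and exactly n - k of the literals l₁,...,lₙ are assigned false, every total assignment extending the partial assignment that satisfies the constraint must assign true to all remaining (unassigned) literals among l₁,...,lₙ. -/
open Finset

/-- Truth value of a literal `(v, p)` under a total assignment. -/
def evalLit {V : Type} (σ : V → Bool) (l : V × Bool) : Bool :=
  if l.2 then σ l.1 else !(σ l.1)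

/-- Truth value of a literal under a partial assignment (`none` if unassigned). -/
def pEvalLit {V : Type} (ρ : V → Option Bool) (l : V × Bool) : Option Bool :=
  (ρ l.1).map (fun b => if l.2 then b else !b)

/-- A total assignment `σ` extends a partial assignment `ρ`. -/
def Extends {V : Type} (ρ : V → Option Bool) (σ : V → Bool) : Prop :=
  ∀ v b, ρ v = some b → σ v = b

/-- Number of true literals among `l₁,...,lₙ` under a total assignment. -/
def trueCount {V : Type} {n : ℕ} (σ : V → Bool) (l : Fin n → V × Bool) : ℕ :=
  (Finset.univ.filter (fun i => evalLit σ (l i) = true)).card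

/-- A conditional cardinality constraint `l_y ↔ (Σᵢ lᵢ ≥ k)` (cutoff `k : ℤ`)
is satisfied by a total assignment. -/
def SatCC {V : Type} {n : ℕ} (σ : V → Bool) (l : Fin n → V × Bool) (ly : V × Bool)
    (k : ℤ) : Prop :=
  evalLit σ ly = true ↔ k ≤ (trueCount σ l : ℤ)


lemma ext_eval {V : Type} {ρ : V → Option Bool} {σ : V → Bool} (h : Extends ρ σ)
    {l : V × Bool} {b : Bool} (hl : pEvalLit ρ l = some b) : evalLit σ l = b := by
  unfold pEvalLit at hl
  cases hρ : ρ l.1 with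
  | none => simp [hρ] at hl
  | some c =>
    simp [hρ] at hl
    unfold evalLit
    rw [h l.1 c hρ]
    revert hl; cases l.2 <;> cases c <;> cases b <;> simp

/-- operand-inferring soundness, positive case. -/
theorem stmt1 {V : Type} {n : ℕ} (l : Fin n → V × Bool) (ly : V × Bool) (k : ℤ)
    (ρ : V → Option Bool)
    (hy : pEvalLit ρ ly = some true)
    (hfalse : (((Finset.univ.filter (fun i => pEvalLit ρ (l i) = some false)).card : ℤ))
        = (n : ℤ) - k) :
    ∀ σ : V → Bool, Extends ρ σ → SatCC σ l ly k →
      ∀ i : Fin n, pEvalLit ρ (l i) = none → evalLit σ (l i) = true := by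
  intro σ hext hsat i hi
  by_contra hcon
  rw [Bool.not_eq_true] at hcon
  have hyt : evalLit σ ly = true := ext_eval hext hy
  have hk : k ≤ (trueCount σ l : ℤ) := hsat.mp hyt
  set S := Finset.univ.filter (fun i => pEvalLit ρ (l i) = some false) with hS
  set F := Finset.univ.filter (fun i => evalLit σ (l i) = false) with hF
  have hiS : i ∉ S := by simp [hS, hi]
  have hsub : insert i S ⊆ F := by
    intro j hj
    rcases Finset.mem_insert.mp hj with rfl | hj
    · simp [hF, hcon]
    · simp only [hS, Finset.mem_filter] at hj
      simp [hF, ext_eval hext hj.2]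
  have hcard : S.card + 1 ≤ F.card := by
    have := Finset.card_le_card hsub
    rwa [Finset.card_insert_of_notMem hiS] at this
  have hcomp : trueCount σ l + F.card = n := by
    have := Finset.card_filter_add_card_filter_not
      (s := (Finset.univ : Finset (Fin n))) (p := fun i => evalLit σ (l i) = true)
    simp only [Finset.card_univ, Fintype.card_fin] at this
    rw [trueCount, hF]
    convert this using 3
    · ext j
      simp [Bool.not_eq_true]
  have : ((S.card : ℤ)) = (n : ℤ) - k := hfalse
  omega
end

section
/- Operand-inferring soundness (negative case): Given a conditional cardinality constraint l_y ↔ (Σᵢ₌₁ⁿ lᵢ ≥ k) and a partial assignment under which l_y is false and exactly k - 1 of the literals l₁,...,lₙ are assigned true, every satisfying total assignment extending the partial assignment must assign false to all remaining unassigned literals among l₁,...,lₙ. -/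
open Finset

/-- operand-inferring soundness, negative case. -/
theorem stmt3 {V : Type} {n : ℕ} (l : Fin n → V × Bool) (ly : V × Bool) (k : ℤ)
    (ρ : V → Option Bool)
    (hy : pEvalLit ρ ly = some false)
    (htrue : (((Finset.univ.filter (fun i => pEvalLit ρ (l i) = some true)).card : ℤ))
        = k - 1) :
    ∀ σ : V → Bool, Extends ρ σ → SatCC σ l ly k →
      ∀ i : Fin n, pEvalLit ρ (l i) = none → evalLit σ (l i) = false := by
  intro σ hext hsat i hi
  have hagree : ∀ m : V × Bool, ∀ b : Bool, pEvalLit ρ m = some b → evalLit σ m = b := by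
    intro m b hm
    simp only [pEvalLit, Option.map_eq_some_iff] at hm
    obtain ⟨a, ha, hab⟩ := hm
    have := hext m.1 a ha
    simp [evalLit, this, ← hab]
  have hyf : evalLit σ ly = false := hagree ly false hy
  by_contra h
  have hit : evalLit σ (l i) = true := by
    cases hb : evalLit σ (l i) with
    | false => exact absurd hb h
    | true => rfl
  -- the partially-true literals form a subset of σ-true literals, not containing i
  have hsub : (Finset.univ.filter (fun j => pEvalLit ρ (l j) = some true)) ⊆
      (Finset.univ.filter (fun j => evalLit σ (l j) = true)).erase i := by
    intro j hj
    simp only [Finset.mem_filter, Finset.mem_univ, true_and] at hj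
    refine Finset.mem_erase.mpr ⟨?_, ?_⟩
    · rintro rfl; rw [hi] at hj; exact nomatch hj
    · simp only [Finset.mem_filter, Finset.mem_univ, true_and]
      exact hagree _ _ hj
  have hcard : (Finset.univ.filter (fun j => pEvalLit ρ (l j) = some true)).card ≤
      (Finset.univ.filter (fun j => evalLit σ (l j) = true)).card - 1 := by
    calc _ ≤ ((Finset.univ.filter (fun j => evalLit σ (l j) = true)).erase i).card :=
          Finset.card_le_card hsub
      _ = _ := by
          rw [Finset.card_erase_of_mem]
          simp [hit]
  have hmem : i ∈ Finset.univ.filter (fun j => evalLit σ (l j) = true) := by simp [hit]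
  have hpos : 1 ≤ (Finset.univ.filter (fun j => evalLit σ (l j) = true)).card :=
    Finset.card_pos.mpr ⟨i, hmem⟩
  have hk : k ≤ (trueCount σ l : ℤ) := by
    have : (k - 1 : ℤ) ≤ ((Finset.univ.filter (fun j => evalLit σ (l j) = true)).card : ℤ) - 1 := by
      rw [← htrue]
      omega
    unfold trueCount
    omega
  have := hsat.mpr hk
  rw [hyf] at this
  exact Bool.noConfusion this
end

section
/- Soundness of the clause-from-bnn proof step with unit simplification: Let φ contain the conditional cardinality constraint l_y ↔ (Σᵢ₌₁ⁿ lᵢ ≥ k) and a set U of unit clauses. Suppose that under the partial assignment obtained by asserting all units in U together with the negations of all literals in a clause C, the BNN propagation rules (operand-inferring or target-inferring) derive a conflict. Then every assignment satisfying the constraint and all units in U satisfies C. -/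
open Finset

lemma extends_pEval {V : Type} {ρ : V → Option Bool} {σ : V → Bool}
    (h : Extends ρ σ) (x : V × Bool) (t : Bool) (hx : pEvalLit ρ x = some t) :
    evalLit σ x = t := by
  unfold pEvalLit at hx
  cases hρx : ρ x.1 with
  | none => simp [hρx] at hx
  | some b =>
    simp [hρx] at hx
    have := h x.1 b hρx
    unfold evalLit
    subst hx
    simp [this]

/-- soundness of the clause-from-bnn proof step with unit simplification.
`U` is the set of unit literals, `C` the derived clause (a set of literals);
`ρ` is the partial assignment asserting all units in `U` together with the
negations of all literals of `C`, and the BNN propagation rules derive a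
conflict from `ρ`. -/
theorem stmt5 {V : Type} {n : ℕ} (l : Fin n → V × Bool) (ly : V × Bool) (k : ℤ)
    (U C : Finset (V × Bool)) (ρ : V → Option Bool)
    (hρ : ∀ (v : V) (b : Bool), ρ v = some b ↔ ((v, b) ∈ U ∨ (v, !b) ∈ C))
    (hconflict :
      (pEvalLit ρ ly = some true ∧
        (((Finset.univ.filter (fun i => pEvalLit ρ (l i) ≠ some false)).card : ℤ)) < k) ∨
      (pEvalLit ρ ly = some false ∧
        k ≤ (((Finset.univ.filter (fun i => pEvalLit ρ (l i) = some true)).card : ℤ)))) :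
    ∀ σ : V → Bool, SatCC σ l ly k → (∀ u ∈ U, evalLit σ u = true) →
      ∃ c ∈ C, evalLit σ c = true := by
  intro σ hsat hU
  by_contra hC
  push_neg at hC
  have hCfalse : ∀ c ∈ C, evalLit σ c = false := by
    intro c hc
    have := hC c hc
    cases h : evalLit σ c
    · rfl
    · exact absurd h this
  have hext : Extends ρ σ := by
    intro v b hvb
    rcases (hρ v b).1 hvb with h | h
    · have := hU _ h
      cases b <;> simpa [evalLit] using this
    · have := hCfalse _ h
      cases b <;> simpa [evalLit] using this
  rcases hconflict with ⟨hy, hk⟩ | ⟨hy, hk⟩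
  · have hyt : evalLit σ ly = true := extends_pEval hext ly true hy
    have hkc : k ≤ (trueCount σ l : ℤ) := hsat.1 hyt
    have hsub : (Finset.univ.filter (fun i => evalLit σ (l i) = true)) ⊆
        (Finset.univ.filter (fun i => pEvalLit ρ (l i) ≠ some false)) := by
      intro i hi
      simp only [mem_filter, mem_univ, true_and] at hi ⊢
      intro hfalse
      have := extends_pEval hext (l i) false hfalse
      rw [hi] at this; exact Bool.noConfusion this
    have := Finset.card_le_card hsub
    unfold trueCount at hkc
    omega
  · have hyf : evalLit σ ly = false := extends_pEval hext ly false hy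
    have hnk : ¬ k ≤ (trueCount σ l : ℤ) := by
      intro h
      have := hsat.2 h
      rw [hyf] at this; exact Bool.noConfusion this
    have hsub : (Finset.univ.filter (fun i => pEvalLit ρ (l i) = some true)) ⊆
        (Finset.univ.filter (fun i => evalLit σ (l i) = true)) := by
      intro i hi
      simp only [mem_filter, mem_univ, true_and] at hi ⊢
      exact extends_pEval hext (l i) true hi
    have := Finset.card_le_card hsub
    unfold trueCount at hnk
    omega
end
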